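/- arXiv:1005.2890 — 3 statements merged into one kernel-verified Lean document; each statement's English description precedes it below -/
import Mathlib

section
/- The kernel of the collision operator Q on L²_M consists exactly of the real multiples of the Maxwellian: Q(f) = 0 if and only if there exists α ∈ ℝ with f(v) = α M(v) almost everywhere. -/
open MeasureTheory Real

/-- Velocity space ℝ³ as ℝ × ℝ × ℝ : `v.1 = v_x`, `v.2.1 = v_y`, `v.2.2 = v_z`. -/
abbrev V : Type := ℝ × ℝ × ℝ

/-- Rotation around the z-axis by angle τ. -/
noncomputable def Rot (τ : ℝ) (v : V) : V :=
  (Real.cos τ * v.1 + Real.sin τ * v.2.1,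
   -Real.sin τ * v.1 + Real.cos τ * v.2.1,
   v.2.2)

/-- The normalized Maxwellian `M(v) = (2π)^{-3/2} exp(-|v|²/2)`. -/
noncomputable def Maxw (v : V) : ℝ :=
  (2 * Real.pi) ^ (-(3:ℝ)/2) * Real.exp (-(v.1^2 + v.2.1^2 + v.2.2^2)/2)

/-- Cylindrical average `A(h)(v) = (1/2π) ∫₀^{2π} h(R(τ)v) dτ`. -/
noncomputable def cylAvg (h : V → ℝ) (v : V) : ℝ :=
  (1/(2*Real.pi)) * ∫ τ in (0:ℝ)..(2*Real.pi), h (Rot τ v)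

/-- The linear Boltzmann collision operator
`Q(f)(v) = ∫ σ(v,v') [M(v) f(v') - M(v') f(v)] dv'`. -/
noncomputable def Qop (σ : V → V → ℝ) (f : V → ℝ) (v : V) : ℝ :=
  ∫ v' : V, σ v v' * (Maxw v * f v' - Maxw v' * f v)

/-! Pairing `Q f` with `f / M` and symmetrizing in `(v, v')` (using `σ v v' = σ v' v`) gives
`∫ (f / M) Q f = -½ ∬ σ(v,v') M(v) M(v') (f(v)/M(v) - f(v')/M(v'))²`; Fubini applies because
`|f| ≤ (f² / M + M) / 2` is integrable and `σ` is bounded. If `Q f = 0` the nonnegative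
integrand on the right vanishes almost everywhere, and as `σ, M > 0` this forces `f / M` to be
almost everywhere constant. -/

section Pointwise

variable {X : Type*}

lemma abs_div_mul_collision_le {m m' f f' s C : ℝ} (hm : 0 < m) (hm' : 0 < m') (hs : |s| ≤ C) :
    |f / m * (s * (m * f' - m' * f))| ≤ C * (|f| * |f'| + f ^ 2 / m * m') := by
  have hmf : |f / m| * m = |f| := by rw [abs_div, abs_of_pos hm, div_mul_cancel₀ _ hm.ne']
  have hff : |f / m| * |f| = f ^ 2 / m := by
    rw [abs_div, abs_of_pos hm, div_mul_eq_mul_div, ← sq, sq_abs]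
  calc |f / m * (s * (m * f' - m' * f))| = |f / m| * (|s| * |m * f' - m' * f|) := by
        rw [abs_mul, abs_mul]
    _ ≤ |f / m| * (C * (m * |f'| + m' * |f|)) := by
        have hdiff : |m * f' - m' * f| ≤ m * |f'| + m' * |f| :=
          calc |m * f' - m' * f| ≤ |m * f'| + |m' * f| := abs_sub _ _
            _ = m * |f'| + m' * |f| := by rw [abs_mul, abs_mul, abs_of_pos hm, abs_of_pos hm']
        exact mul_le_mul_of_nonneg_left
          (mul_le_mul hs hdiff (abs_nonneg _) ((abs_nonneg _).trans hs)) (abs_nonneg _)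
    _ = C * (|f / m| * m * |f'| + |f / m| * |f| * m') := by ring
    _ = C * (|f| * |f'| + f ^ 2 / m * m') := by rw [hmf, hff]

lemma div_mul_collision_add_swap {m m' f f' s : ℝ} (hm : m ≠ 0) (hm' : m' ≠ 0) :
    f / m * (s * (m * f' - m' * f)) + f' / m' * (s * (m' * f - m * f'))
      = -(s * m * m' * (f / m - f' / m') ^ 2) := by
  field_simp
  ring

noncomputable def collisionPairing (M : X → ℝ) (σ : X → X → ℝ) (f : X → ℝ) (p : X × X) : ℝ :=
  f p.1 / M p.1 * (σ p.1 p.2 * (M p.1 * f p.2 - M p.2 * f p.1))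

noncomputable def dissipation (M : X → ℝ) (σ : X → X → ℝ) (f : X → ℝ) (p : X × X) : ℝ :=
  σ p.1 p.2 * M p.1 * M p.2 * (f p.1 / M p.1 - f p.2 / M p.2) ^ 2

variable {M : X → ℝ} {σ : X → X → ℝ} {f : X → ℝ}

lemma collisionPairing_add_swap (hM : ∀ x, M x ≠ 0) (hσ_symm : ∀ v v', σ v v' = σ v' v)
    (p : X × X) :
    collisionPairing M σ f p + collisionPairing M σ f p.swap = -dissipation M σ f p := by
  rw [collisionPairing, collisionPairing, dissipation, Prod.fst_swap, Prod.snd_swap,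
    hσ_symm p.2 p.1, div_mul_collision_add_swap (hM _) (hM _)]

lemma dissipation_nonneg (hM : ∀ x, 0 < M x) (hσ_pos : ∀ v v', 0 < σ v v') (p : X × X) :
    0 ≤ dissipation M σ f p := by
  have := hM p.1
  have := hM p.2
  have := hσ_pos p.1 p.2
  unfold dissipation
  positivity

lemma dissipation_eq_zero_iff (hM : ∀ x, 0 < M x) (hσ_pos : ∀ v v', 0 < σ v v') (p : X × X) :
    dissipation M σ f p = 0 ↔ f p.1 / M p.1 = f p.2 / M p.2 := by
  have hweight : σ p.1 p.2 * M p.1 * M p.2 ≠ 0 :=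
    (mul_pos (mul_pos (hσ_pos _ _) (hM _)) (hM _)).ne'
  rw [dissipation, mul_eq_zero, or_iff_right hweight, sq_eq_zero_iff, sub_eq_zero]

end Pointwise

section Collision

variable {X : Type*} [MeasurableSpace X] {μ : Measure X}

lemma integrable_of_integrable_sq_div {w f : X → ℝ} (hw : ∀ x, 0 < w x)
    (hw_int : Integrable w μ) (hf : AEStronglyMeasurable f μ)
    (hf_int : Integrable (fun x => f x ^ 2 / w x) μ) : Integrable f μ := by
  refine ((hf_int.add hw_int).const_mul (1 / 2)).mono' hf (.of_forall fun x => ?_)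
  have hfw : f x ^ 2 / w x * w x = |f x| ^ 2 := by
    rw [div_mul_cancel₀ _ (hw x).ne', sq_abs]
  rw [Real.norm_eq_abs, Pi.add_apply]
  -- AM-GM: `2 |f| w ≤ f² + w²`
  refine le_of_mul_le_mul_right ?_ (hw x)
  nlinarith [sq_nonneg (|f x| - w x)]

lemma exists_ae_eq_const_of_ae_prod_eq [SFinite μ] {g : X → ℝ}
    (h : ∀ᵐ p ∂μ.prod μ, g p.1 = g p.2) : ∃ c, ∀ᵐ x ∂μ, g x = c := by
  rcases eq_zero_or_neZero μ with rfl | _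
  · exact ⟨0, by simp⟩
  · obtain ⟨x₀, hx₀⟩ := (Measure.ae_ae_of_ae_prod h).exists
    exact ⟨g x₀, hx₀.mono fun _ hx => hx.symm⟩

noncomputable def collisionOp (μ : Measure X) (M : X → ℝ) (σ : X → X → ℝ) (f : X → ℝ) (v : X) : ℝ :=
  ∫ v', σ v v' * (M v * f v' - M v' * f v) ∂μ

variable {M : X → ℝ} {σ : X → X → ℝ} {f : X → ℝ}

lemma integrable_collisionPairing {C : ℝ} (hM : ∀ x, 0 < M x) (hM_int : Integrable M μ)
    (hσ : AEStronglyMeasurable (Function.uncurry σ) (μ.prod μ)) (hσ_le : ∀ v v', |σ v v'| ≤ C)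
    (hf : AEStronglyMeasurable f μ) (hf_int : Integrable (fun v => f v ^ 2 / M v) μ) :
    Integrable (collisionPairing M σ f) (μ.prod μ) := by
  have hf₁ := integrable_of_integrable_sq_div hM hM_int hf hf_int
  have hf_div : AEStronglyMeasurable (fun v => f v / M v) μ :=
    (hf.aemeasurable.div hM_int.aemeasurable).aestronglyMeasurable
  have hflux : AEStronglyMeasurable (fun p : X × X => M p.1 * f p.2 - M p.2 * f p.1) (μ.prod μ) :=
    (hM_int.1.comp_fst.mul hf.comp_snd).sub (hM_int.1.comp_snd.mul hf.comp_fst)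
  refine (((hf₁.abs.mul_prod hf₁.abs).add (hf_int.mul_prod hM_int)).const_mul C).mono'
    (hf_div.comp_fst.mul (hσ.mul hflux)) (.of_forall fun p => ?_)
  exact abs_div_mul_collision_le (hM _) (hM _) (hσ_le _ _)

lemma integral_dissipation [SFinite μ] (hM : ∀ x, M x ≠ 0) (hσ_symm : ∀ v v', σ v v' = σ v' v)
    (hP : Integrable (collisionPairing M σ f) (μ.prod μ)) :
    ∫ p, dissipation M σ f p ∂μ.prod μ = -2 * ∫ v, f v / M v * collisionOp μ M σ f v ∂μ := by
  have hpairing : ∫ p, collisionPairing M σ f p ∂μ.prod μ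
      = ∫ v, f v / M v * collisionOp μ M σ f v ∂μ := by
    rw [integral_prod _ hP]
    simp only [collisionPairing, collisionOp, integral_const_mul]
  have hswap : ∫ p, collisionPairing M σ f p.swap ∂μ.prod μ
      = ∫ p, collisionPairing M σ f p ∂μ.prod μ :=
    integral_prod_swap _
  calc ∫ p, dissipation M σ f p ∂μ.prod μ
      = -∫ p, (collisionPairing M σ f p + collisionPairing M σ f p.swap) ∂μ.prod μ := by
        rw [← integral_neg]
        simp only [collisionPairing_add_swap hM hσ_symm, neg_neg]
    _ = -2 * ∫ v, f v / M v * collisionOp μ M σ f v ∂μ := by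
        rw [integral_add hP (hP.swap : Integrable (fun p => collisionPairing M σ f p.swap) _),
          hswap, hpairing]
        ring

lemma ae_collisionOp_eq_zero_of_ae_eq_const_mul {α : ℝ} (h : ∀ᵐ v ∂μ, f v = α * M v) :
    ∀ᵐ v ∂μ, collisionOp μ M σ f v = 0 := by
  filter_upwards [h] with v hv
  refine integral_eq_zero_of_ae (h.mono fun v' hv' => ?_)
  simp only [hv, hv', Pi.zero_apply]
  ring

lemma exists_ae_eq_const_mul_of_ae_collisionOp_eq_zero [SFinite μ] {C : ℝ}
    (hM : ∀ x, 0 < M x) (hM_int : Integrable M μ)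
    (hσ : AEStronglyMeasurable (Function.uncurry σ) (μ.prod μ))
    (hσ_symm : ∀ v v', σ v v' = σ v' v) (hσ_pos : ∀ v v', 0 < σ v v')
    (hσ_le : ∀ v v', |σ v v'| ≤ C)
    (hf : AEStronglyMeasurable f μ) (hf_int : Integrable (fun v => f v ^ 2 / M v) μ)
    (hQ : ∀ᵐ v ∂μ, collisionOp μ M σ f v = 0) : ∃ α : ℝ, ∀ᵐ v ∂μ, f v = α * M v := by
  have hM₀ : ∀ x, M x ≠ 0 := fun x => (hM x).ne'
  have hP := integrable_collisionPairing hM hM_int hσ hσ_le hf hf_int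
  have hD_int : Integrable (dissipation M σ f) (μ.prod μ) :=
    (hP.add hP.swap).neg.congr (.of_forall fun p => by
      simp only [Pi.neg_apply, Pi.add_apply, Function.comp_apply,
        collisionPairing_add_swap hM₀ hσ_symm, neg_neg])
  have hD_zero : ∫ p, dissipation M σ f p ∂μ.prod μ = 0 := by
    rw [integral_dissipation hM₀ hσ_symm hP,
      integral_eq_zero_of_ae (hQ.mono fun v hv => by simp [hv]), mul_zero]
  have hD_ae : dissipation M σ f =ᵐ[μ.prod μ] 0 :=
    (integral_eq_zero_iff_of_nonneg (dissipation_nonneg hM hσ_pos) hD_int).mp hD_zero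
  obtain ⟨α, hα⟩ := exists_ae_eq_const_of_ae_prod_eq (g := fun v => f v / M v)
    (hD_ae.mono fun p hp => (dissipation_eq_zero_iff hM hσ_pos p).mp hp)
  exact ⟨α, hα.mono fun v hv => by rw [← hv, div_mul_cancel₀ _ (hM₀ v)]⟩

end Collision

lemma Maxw_pos (v : V) : 0 < Maxw v := by
  unfold Maxw
  positivity

lemma integrable_Maxw : Integrable Maxw := by
  have hG : Integrable fun x : ℝ => Real.exp (-(1 / 2) * x ^ 2) :=
    integrable_exp_neg_mul_sq (by norm_num)
  have hG₃ : Integrable (fun v : V => (2 * π) ^ (-(3 : ℝ) / 2) *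
      (Real.exp (-(1 / 2) * v.1 ^ 2) *
        (Real.exp (-(1 / 2) * v.2.1 ^ 2) * Real.exp (-(1 / 2) * v.2.2 ^ 2))))
      (volume.prod (volume.prod volume)) :=
    (hG.mul_prod (hG.mul_prod hG)).const_mul _
  rw [← Measure.volume_eq_prod, ← Measure.volume_eq_prod] at hG₃
  refine hG₃.congr (.of_forall fun v => ?_)
  simp only [Maxw, ← Real.exp_add]
  ring_nf

/-- the kernel of `Q` on `L²_M` is the line spanned by the Maxwellian. -/
theorem collision_kernel (σ : V → V → ℝ) (α₁ α₂ : ℝ) (hα₁ : 0 < α₁)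
    (hσmeas : Measurable (Function.uncurry σ))
    (hσsym : ∀ v v' : V, σ v v' = σ v' v)
    (hσbound : ∀ v v' : V, α₁ ≤ σ v v' ∧ σ v v' ≤ α₂)
    (f : V → ℝ) (hfmeas : AEStronglyMeasurable f (volume : Measure V))
    (hf : Integrable (fun v => (f v)^2 / Maxw v) (volume : Measure V)) :
    (∀ᵐ v : V ∂(volume : Measure V), Qop σ f v = 0) ↔
      ∃ α : ℝ, ∀ᵐ v : V ∂(volume : Measure V), f v = α * Maxw v := by
  have hσ_pos : ∀ v v', 0 < σ v v' := fun v v' => hα₁.trans_le (hσbound v v').1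
  have hσ_le : ∀ v v', |σ v v'| ≤ α₂ := fun v v' =>
    (abs_of_pos (hσ_pos v v')).trans_le (hσbound v v').2
  refine ⟨exists_ae_eq_const_mul_of_ae_collisionOp_eq_zero Maxw_pos integrable_Maxw
    hσmeas.aestronglyMeasurable hσsym hσ_pos hσ_le hfmeas hf, ?_⟩
  rintro ⟨α, hα⟩
  exact ae_collisionOp_eq_zero_of_ae_eq_const_mul hα
end

section
/- In the relaxation-time case σ(v,v') = 1/τ with τ > 0, the solution X^η of −Q^η(X^η) = (v_⊥/η², v_z) M with ∫ X^η dv = 0 yields the explicit diffusion matrix D^η = τ · [[η²/(τ²+η⁴), τ/(τ²+η⁴), 0], [−τ/(τ²+η⁴), η²/(τ²+η⁴), 0], [0, 0, 1]]. In particular, for the z-component, X_z^η = τ v_z M and ∫ v_z X_z^η dv = τ. -/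
open MeasureTheory Real

/-- The gyration operator `G(f)(v) = (v × e_z)·∇_v f = v_y ∂_{v_x} f - v_x ∂_{v_y} f`. -/
noncomputable def gyro (f : V → ℝ) (v : V) : ℝ :=
  v.2.1 * fderiv ℝ f v (1, 0, 0) - v.1 * fderiv ℝ f v (0, 1, 0)

/-- Relaxation-time collision operator `Q(f) = (1/τ)[(∫ f dv') M - f]`,
i.e. the operator `Qop` with `σ(v,v') = 1/τ`. -/
noncomputable def Qrel (τ : ℝ) (f : V → ℝ) (v : V) : ℝ :=
  (1/τ) * ((∫ v' : V, f v') * Maxw v - f v)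

/-- `Q^η = Q - (1/η²)(v × e_z)·∇_v` in the relaxation-time case. -/
noncomputable def Qηrel (τ η : ℝ) (f : V → ℝ) (v : V) : ℝ :=
  Qrel τ f v - (1/η^2) * gyro f v

/-!
Once `∫ X = 0`, the equation `-Q^η X = S` reads `X / τ + G X / η² = S`, where `G = (v × e_z)·∇_v`.
Along the rotation orbits `θ ↦ R(θ) v` the operator `G` is `d/dθ`, so `G f = c f` with `c ≠ 0`
gives `f (R(θ) v) = e^{cθ} f v`, which is `2π`-periodic only if `f v = 0`: the equation has at
most one differentiable solution. As `M` is rotation invariant,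
`G ((a v_x + b v_y + d v_z) M) = (a v_y - b v_x) M`, so a `2 × 2` linear system for `(a, b)` gives
the solution in closed form, and the diffusion matrix reduces to the moments `∫ v_i v_j M = δ_ij`
of the standard Gaussian.
-/

open ProbabilityTheory

namespace Relaxation

lemma Rot_zero (v : V) : Rot 0 v = v := by simp [Rot]

lemma Rot_two_pi (v : V) : Rot (2 * π) v = v := by simp [Rot]

lemma hasDerivAt_Rot (v : V) (θ : ℝ) :
    HasDerivAt (fun θ => Rot θ v) ((Rot θ v).2.1, -(Rot θ v).1, 0) θ := by
  have h₁ := ((hasDerivAt_cos θ).mul_const v.1).add ((hasDerivAt_sin θ).mul_const v.2.1)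
  have h₂ := ((hasDerivAt_sin θ).neg.mul_const v.1).add ((hasDerivAt_cos θ).mul_const v.2.1)
  refine (h₁.prodMk (h₂.prodMk (hasDerivAt_const θ v.2.2))).congr_deriv ?_
  simp only [Rot, Prod.mk.injEq]
  exact ⟨trivial, by ring, trivial⟩

lemma hasDerivAt_comp_Rot {f : V → ℝ} {v : V} {θ : ℝ} (hf : DifferentiableAt ℝ f (Rot θ v)) :
    HasDerivAt (fun θ => f (Rot θ v)) (gyro f (Rot θ v)) θ := by
  refine (hf.hasFDerivAt.comp_hasDerivAt θ (hasDerivAt_Rot v θ)).congr_deriv ?_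
  have hvec : ((Rot θ v).2.1, -(Rot θ v).1, (0 : ℝ))
      = (Rot θ v).2.1 • ((1 : ℝ), (0 : ℝ), (0 : ℝ))
        + (-(Rot θ v).1) • ((0 : ℝ), (1 : ℝ), (0 : ℝ)) := by
    simp
  rw [hvec, map_add, map_smul, map_smul, gyro, smul_eq_mul, smul_eq_mul]
  ring

lemma gyro_sub {f g : V → ℝ} {v : V} (hf : DifferentiableAt ℝ f v) (hg : DifferentiableAt ℝ g v) :
    gyro (f - g) v = gyro f v - gyro g v := by
  simp only [gyro, fderiv_sub hf hg, sub_apply]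
  ring

lemma eq_zero_of_gyro_eq_mul {c : ℝ} (hc : c ≠ 0) {f : V → ℝ} (hf : Differentiable ℝ f)
    (h : ∀ v, gyro f v = c * f v) (v : V) : f v = 0 := by
  have hconst : ∀ θ, HasDerivAt (fun θ => f (Rot θ v) * exp (-(c * θ))) 0 θ := fun θ => by
    refine ((hasDerivAt_comp_Rot (hf _)).mul ((hasDerivAt_id θ).const_mul c).neg.exp).congr_deriv ?_
    rw [h]
    simp only [id_eq, Pi.neg_apply, mul_one, mul_neg]
    ring
  have hperiod := is_const_of_deriv_eq_zero (fun θ => (hconst θ).differentiableAt)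
    (fun θ => (hconst θ).deriv) (2 * π) 0
  simp only [Rot_two_pi, Rot_zero, mul_zero, neg_zero, exp_zero, mul_one] at hperiod
  by_contra hfv
  have : c * (2 * π) = 0 := by
    simpa using exp_eq_one_iff _ |>.mp (mul_left_cancel₀ hfv (hperiod.trans (mul_one _).symm))
  exact hc (by simpa [pi_ne_zero] using this)

lemma Maxw_Rot (θ : ℝ) (v : V) : Maxw (Rot θ v) = Maxw v := by
  have h : (cos θ * v.1 + sin θ * v.2.1) ^ 2 + (-sin θ * v.1 + cos θ * v.2.1) ^ 2
      = v.1 ^ 2 + v.2.1 ^ 2 := by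
    linear_combination (v.1 ^ 2 + v.2.1 ^ 2) * sin_sq_add_cos_sq θ
  simp only [Maxw, Rot, h]

lemma differentiable_Maxw : Differentiable ℝ Maxw := by
  unfold Maxw
  fun_prop

noncomputable def linMaxw (a b d : ℝ) (v : V) : ℝ :=
  (a * v.1 + b * v.2.1 + d * v.2.2) * Maxw v

lemma differentiable_linMaxw (a b d : ℝ) : Differentiable ℝ (linMaxw a b d) :=
  (by fun_prop : Differentiable ℝ fun v : V => a * v.1 + b * v.2.1 + d * v.2.2).mul
    differentiable_Maxw

lemma gyro_linMaxw (a b d : ℝ) (v : V) : gyro (linMaxw a b d) v = linMaxw (-b) a 0 v := by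
  have hrot : HasDerivAt (fun θ => linMaxw a b d (Rot θ v)) (linMaxw (-b) a 0 v) 0 := by
    have hx := ((hasDerivAt_cos 0).mul_const v.1).add ((hasDerivAt_sin 0).mul_const v.2.1)
    have hy := ((hasDerivAt_sin 0).neg.mul_const v.1).add ((hasDerivAt_cos 0).mul_const v.2.1)
    have := ((hx.const_mul a).add (hy.const_mul b) |>.add_const (d * v.2.2)).mul_const (Maxw v)
    refine (this.congr_deriv ?_).congr_of_eventuallyEq (Filter.Eventually.of_forall fun θ => ?_)
    · simp only [linMaxw, sin_zero, cos_zero]; ring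
    · show linMaxw a b d (Rot θ v) = _
      rw [linMaxw, Maxw_Rot]; rfl
  have hgyro := hasDerivAt_comp_Rot (v := v) (θ := 0) (differentiable_linMaxw a b d _)
  rw [Rot_zero] at hgyro
  exact hgyro.unique hrot

lemma neg_Qηrel_of_integral_eq_zero {τ η : ℝ} {X : V → ℝ} (hX : ∫ v, X v = 0) (v : V) :
    -Qηrel τ η X v = X v / τ + gyro X v / η ^ 2 := by
  simp only [Qηrel, Qrel, hX]
  ring

/-- The coefficients solve `a / τ - b / η² = p`, `b / τ + a / η² = q`, `d / τ = r`. -/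
theorem eq_linMaxw_of_neg_Qηrel_eq {τ η : ℝ} (hτ : τ ≠ 0) (hη : η ≠ 0) {X : V → ℝ}
    (hX : Differentiable ℝ X) (hmean : ∫ v, X v = 0) {p q r : ℝ}
    (hsrc : ∀ v, -Qηrel τ η X v = (p * v.1 + q * v.2.1 + r * v.2.2) * Maxw v) :
    X = linMaxw (τ * η ^ 2 * (p * η ^ 2 + q * τ) / (τ ^ 2 + η ^ 4))
      (τ * η ^ 2 * (q * η ^ 2 - p * τ) / (τ ^ 2 + η ^ 4)) (τ * r) := by
  set Y := linMaxw (τ * η ^ 2 * (p * η ^ 2 + q * τ) / (τ ^ 2 + η ^ 4))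
    (τ * η ^ 2 * (q * η ^ 2 - p * τ) / (τ ^ 2 + η ^ 4)) (τ * r)
  have hS : τ ^ 2 + η ^ 4 ≠ 0 := by positivity
  have hY : Differentiable ℝ Y := differentiable_linMaxw _ _ _
  have hYsrc : ∀ v, Y v / τ + gyro Y v / η ^ 2 = (p * v.1 + q * v.2.1 + r * v.2.2) * Maxw v := by
    intro v
    simp only [Y, gyro_linMaxw, linMaxw]
    field_simp
    ring
  have hc : -(η ^ 2 / τ) ≠ 0 := neg_ne_zero.mpr (by positivity)
  funext v
  refine sub_eq_zero.mp (eq_zero_of_gyro_eq_mul hc (hX.sub hY) (fun w => ?_) v)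
  have hXw : X w / τ + gyro X w / η ^ 2 = Y w / τ + gyro Y w / η ^ 2 := by
    rw [hYsrc, ← neg_Qηrel_of_integral_eq_zero hmean, hsrc]
  rw [gyro_sub (hX w) (hY w), Pi.sub_apply]
  field_simp at hXw ⊢
  linear_combination hXw

lemma integrable_pow_mul_gaussianPDFReal (n : ℕ) :
    Integrable fun x : ℝ => x ^ n * gaussianPDFReal 0 1 x := by
  refine ((integrable_rpow_mul_exp_neg_mul_sq (b := 1 / 2) (by norm_num) (s := n)
    (neg_one_lt_zero.trans_le n.cast_nonneg)).const_mul (√(2 * π))⁻¹).congr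
    (Filter.Eventually.of_forall fun x => ?_)
  simp only [gaussianPDFReal, rpow_natCast, NNReal.coe_one, sub_zero, mul_one]
  ring_nf

lemma integral_gaussianPDFReal_mul (f : ℝ → ℝ) :
    ∫ x, f x * gaussianPDFReal 0 1 x = ∫ x, f x ∂gaussianReal 0 1 := by
  simp_rw [integral_gaussianReal_eq_integral_smul one_ne_zero, smul_eq_mul, mul_comm]

lemma integral_id_mul_gaussianPDFReal : ∫ x, x * gaussianPDFReal 0 1 x = 0 := by
  rw [integral_gaussianPDFReal_mul (fun x => x), integral_id_gaussianReal]

lemma integral_sq_mul_gaussianPDFReal : ∫ x, x ^ 2 * gaussianPDFReal 0 1 x = 1 := by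
  have h := variance_eq_integral (X := fun x : ℝ => x) (μ := gaussianReal 0 1) aemeasurable_id
  rw [variance_fun_id_gaussianReal, integral_id_gaussianReal] at h
  simpa [integral_gaussianPDFReal_mul (fun x => x ^ 2)] using h.symm

lemma Maxw_eq_mul (v : V) :
    Maxw v = gaussianPDFReal 0 1 v.1 * (gaussianPDFReal 0 1 v.2.1 * gaussianPDFReal 0 1 v.2.2) := by
  have hc : (2 * π) ^ (-(3 : ℝ) / 2) = (√(2 * π))⁻¹ ^ 3 := by
    rw [sqrt_eq_rpow, ← rpow_neg (by positivity), ← rpow_natCast, ← rpow_mul (by positivity)]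
    norm_num
  simp only [Maxw, gaussianPDFReal, hc, NNReal.coe_one, sub_zero, mul_one]
  rw [show -(v.1 ^ 2 + v.2.1 ^ 2 + v.2.2 ^ 2) / 2
      = -v.1 ^ 2 / 2 + (-v.2.1 ^ 2 / 2 + -v.2.2 ^ 2 / 2) by ring, exp_add, exp_add]
  ring

lemma integrable_mul_prod_three {f g h : ℝ → ℝ} (hf : Integrable f) (hg : Integrable g)
    (hh : Integrable h) : Integrable fun v : V => f v.1 * (g v.2.1 * h v.2.2) := by
  have hgh : Integrable (fun y : ℝ × ℝ => g y.1 * h y.2) := by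
    rw [Measure.volume_eq_prod]
    exact hg.mul_prod hh
  rw [Measure.volume_eq_prod]
  exact hf.mul_prod hgh

lemma integral_mul_prod_three (f g h : ℝ → ℝ) :
    ∫ v : V, f v.1 * (g v.2.1 * h v.2.2) = (∫ x, f x) * ((∫ x, g x) * ∫ x, h x) := by
  rw [Measure.volume_eq_prod, integral_prod_mul f (fun y : ℝ × ℝ => g y.1 * h y.2),
    Measure.volume_eq_prod, integral_prod_mul]

noncomputable def monoMaxw (i j k : ℕ) (v : V) : ℝ :=
  v.1 ^ i * v.2.1 ^ j * v.2.2 ^ k * Maxw v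

lemma monoMaxw_eq_mul (i j k : ℕ) (v : V) :
    monoMaxw i j k v = v.1 ^ i * gaussianPDFReal 0 1 v.1 *
      (v.2.1 ^ j * gaussianPDFReal 0 1 v.2.1 * (v.2.2 ^ k * gaussianPDFReal 0 1 v.2.2)) := by
  rw [monoMaxw, Maxw_eq_mul]
  ring

lemma integrable_monoMaxw (i j k : ℕ) : Integrable (monoMaxw i j k) := by
  simp only [funext (monoMaxw_eq_mul i j k)]
  exact integrable_mul_prod_three (integrable_pow_mul_gaussianPDFReal i)
    (integrable_pow_mul_gaussianPDFReal j) (integrable_pow_mul_gaussianPDFReal k)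

lemma integral_monoMaxw (i j k : ℕ) :
    ∫ v, monoMaxw i j k v = (∫ x, x ^ i * gaussianPDFReal 0 1 x) *
      ((∫ x, x ^ j * gaussianPDFReal 0 1 x) * ∫ x, x ^ k * gaussianPDFReal 0 1 x) := by
  simp only [monoMaxw_eq_mul]
  exact integral_mul_prod_three (fun x => x ^ i * gaussianPDFReal 0 1 x)
    (fun x => x ^ j * gaussianPDFReal 0 1 x) (fun x => x ^ k * gaussianPDFReal 0 1 x)

lemma integral_linear_comb {α : Type*} [MeasurableSpace α] {μ : Measure α} {f g h : α → ℝ}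
    (hf : Integrable f μ) (hg : Integrable g μ) (hh : Integrable h μ) (a b d : ℝ) :
    ∫ x, a * f x + b * g x + d * h x ∂μ
      = a * (∫ x, f x ∂μ) + b * (∫ x, g x ∂μ) + d * ∫ x, h x ∂μ := by
  have hfg : Integrable (fun x => a * f x + b * g x) μ := (hf.const_mul a).add (hg.const_mul b)
  rw [integral_add hfg (hh.const_mul d), integral_add (hf.const_mul a) (hg.const_mul b),
    integral_const_mul, integral_const_mul, integral_const_mul]

lemma integral_coord_mul_linMaxw (a b d : ℝ) :
    (∫ v, v.1 * linMaxw a b d v) = a ∧ (∫ v, v.2.1 * linMaxw a b d v) = b ∧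
      (∫ v, v.2.2 * linMaxw a b d v) = d := by
  have hm := integrable_monoMaxw
  refine ⟨?_, ?_, ?_⟩
  · have e : ∀ v : V, v.1 * linMaxw a b d v
        = a * monoMaxw 2 0 0 v + b * monoMaxw 1 1 0 v + d * monoMaxw 1 0 1 v := fun v => by
      simp only [linMaxw, monoMaxw]; ring
    simp only [e, integral_linear_comb (hm 2 0 0) (hm 1 1 0) (hm 1 0 1), integral_monoMaxw]
    simp [integral_gaussianPDFReal_eq_one 0 one_ne_zero, integral_id_mul_gaussianPDFReal,
      integral_sq_mul_gaussianPDFReal]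
  · have e : ∀ v : V, v.2.1 * linMaxw a b d v
        = a * monoMaxw 1 1 0 v + b * monoMaxw 0 2 0 v + d * monoMaxw 0 1 1 v := fun v => by
      simp only [linMaxw, monoMaxw]; ring
    simp only [e, integral_linear_comb (hm 1 1 0) (hm 0 2 0) (hm 0 1 1), integral_monoMaxw]
    simp [integral_gaussianPDFReal_eq_one 0 one_ne_zero, integral_id_mul_gaussianPDFReal,
      integral_sq_mul_gaussianPDFReal]
  · have e : ∀ v : V, v.2.2 * linMaxw a b d v
        = a * monoMaxw 1 0 1 v + b * monoMaxw 0 1 1 v + d * monoMaxw 0 0 2 v := fun v => by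
      simp only [linMaxw, monoMaxw]; ring
    simp only [e, integral_linear_comb (hm 1 0 1) (hm 0 1 1) (hm 0 0 2), integral_monoMaxw]
    simp [integral_gaussianPDFReal_eq_one 0 one_ne_zero, integral_id_mul_gaussianPDFReal,
      integral_sq_mul_gaussianPDFReal]

end Relaxation

open Relaxation in
theorem relaxation_diffusion_matrix_general (τ η : ℝ) (hτ : 0 < τ) (hη : 0 < η)
    (X₁ X₂ X₃ : V → ℝ)
    (hC : ContDiff ℝ 1 X₁ ∧ ContDiff ℝ 1 X₂ ∧ ContDiff ℝ 1 X₃)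
    (heq₁ : ∀ v : V, -Qηrel τ η X₁ v = (v.1 / η^2) * Maxw v)
    (heq₂ : ∀ v : V, -Qηrel τ η X₂ v = (v.2.1 / η^2) * Maxw v)
    (heq₃ : ∀ v : V, -Qηrel τ η X₃ v = v.2.2 * Maxw v)
    (hz : (∫ v : V, X₁ v) = 0 ∧ (∫ v : V, X₂ v) = 0 ∧ (∫ v : V, X₃ v) = 0) :
    (∀ v : V, X₃ v = τ * (v.2.2 * Maxw v)) ∧
    (∫ v : V, v.2.2 * X₃ v) = τ ∧
    (!![∫ v : V, (v.1/η) * (η * X₁ v), ∫ v : V, (v.1/η) * (η * X₂ v),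
          ∫ v : V, (v.1/η) * X₃ v;
        ∫ v : V, (v.2.1/η) * (η * X₁ v), ∫ v : V, (v.2.1/η) * (η * X₂ v),
          ∫ v : V, (v.2.1/η) * X₃ v;
        ∫ v : V, v.2.2 * (η * X₁ v), ∫ v : V, v.2.2 * (η * X₂ v),
          ∫ v : V, v.2.2 * X₃ v] : Matrix (Fin 3) (Fin 3) ℝ) =
      τ • !![η^2/(τ^2+η^4), τ/(τ^2+η^4), 0;
             -τ/(τ^2+η^4), η^2/(τ^2+η^4), 0;
             0, 0, 1] := by
  obtain ⟨hC₁, hC₂, hC₃⟩ := hC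
  obtain ⟨hz₁, hz₂, hz₃⟩ := hz
  have hX₁ := eq_linMaxw_of_neg_Qηrel_eq hτ.ne' hη.ne' (hC₁.differentiable one_ne_zero) hz₁
    (p := 1 / η ^ 2) (q := 0) (r := 0) fun v => by rw [heq₁]; ring
  have hX₂ := eq_linMaxw_of_neg_Qηrel_eq hτ.ne' hη.ne' (hC₂.differentiable one_ne_zero) hz₂
    (p := 0) (q := 1 / η ^ 2) (r := 0) fun v => by rw [heq₂]; ring
  have hX₃ := eq_linMaxw_of_neg_Qηrel_eq hτ.ne' hη.ne' (hC₃.differentiable one_ne_zero) hz₃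
    (p := 0) (q := 0) (r := 1) fun v => by rw [heq₃]; ring
  subst hX₁ hX₂ hX₃
  have hscale : ∀ x y : ℝ, x / η * (η * y) = x * y := fun x y => by field_simp
  simp only [hscale, div_mul_eq_mul_div, mul_left_comm _ η, integral_div, integral_const_mul,
    (integral_coord_mul_linMaxw _ _ _).1, (integral_coord_mul_linMaxw _ _ _).2.1,
    (integral_coord_mul_linMaxw _ _ _).2.2]
  refine ⟨fun v => by simp [linMaxw, mul_assoc], by ring, ?_⟩
  ext i j
  fin_cases i <;> fin_cases j <;> simp <;> field_simp

/-- in the relaxation-time case `σ = 1/τ`, the solution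
`X^η = (X₁, X₂, X₃)` of `-Q^η(X^η) = (v_⊥/η², v_z) M`, `∫ X^η dv = 0`,
gives the explicit diffusion matrix
`D^η = τ·[[η²/(τ²+η⁴), τ/(τ²+η⁴), 0],[-τ/(τ²+η⁴), η²/(τ²+η⁴), 0],[0,0,1]]`;
in particular `X₃ = τ v_z M` and `∫ v_z X₃ dv = τ`. -/
theorem relaxation_diffusion_matrix (τ η : ℝ) (hτ : 0 < τ) (hη : 0 < η)
    (X₁ X₂ X₃ : V → ℝ)
    (hC : ContDiff ℝ 1 X₁ ∧ ContDiff ℝ 1 X₂ ∧ ContDiff ℝ 1 X₃)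
    (hint : Integrable X₁ (volume : Measure V) ∧ Integrable X₂ (volume : Measure V) ∧
            Integrable X₃ (volume : Measure V))
    (hmom : ∀ i : Fin 3, Integrable
      (fun v : V => (![v.1, v.2.1, v.2.2] i) * X₁ v) (volume : Measure V) ∧
      Integrable (fun v : V => (![v.1, v.2.1, v.2.2] i) * X₂ v) (volume : Measure V) ∧
      Integrable (fun v : V => (![v.1, v.2.1, v.2.2] i) * X₃ v) (volume : Measure V))
    (heq₁ : ∀ v : V, -Qηrel τ η X₁ v = (v.1 / η^2) * Maxw v)
    (heq₂ : ∀ v : V, -Qηrel τ η X₂ v = (v.2.1 / η^2) * Maxw v)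
    (heq₃ : ∀ v : V, -Qηrel τ η X₃ v = v.2.2 * Maxw v)
    (hz : (∫ v : V, X₁ v) = 0 ∧ (∫ v : V, X₂ v) = 0 ∧ (∫ v : V, X₃ v) = 0) :
    (∀ v : V, X₃ v = τ * (v.2.2 * Maxw v)) ∧
    (∫ v : V, v.2.2 * X₃ v) = τ ∧
    (!![∫ v : V, (v.1/η) * (η * X₁ v), ∫ v : V, (v.1/η) * (η * X₂ v),
          ∫ v : V, (v.1/η) * X₃ v;
        ∫ v : V, (v.2.1/η) * (η * X₁ v), ∫ v : V, (v.2.1/η) * (η * X₂ v),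
          ∫ v : V, (v.2.1/η) * X₃ v;
        ∫ v : V, v.2.2 * (η * X₁ v), ∫ v : V, v.2.2 * (η * X₂ v),
          ∫ v : V, v.2.2 * X₃ v] : Matrix (Fin 3) (Fin 3) ℝ) =
      τ • !![η^2/(τ^2+η^4), τ/(τ^2+η^4), 0;
             -τ/(τ^2+η^4), η^2/(τ^2+η^4), 0;
             0, 0, 1] :=
  relaxation_diffusion_matrix_general τ η hτ hη X₁ X₂ X₃ hC heq₁ heq₂ heq₃ hz
end

section
/- Let g ∈ L²_M be continuous with zero cylindrical average A(g) = 0, and let ν be continuous with α₁ ≤ ν ≤ α₂. Define A₁(g)(v) = (1/(2π ν̄(v))) ∫₀^{2π} g(R(τ)v) ∫₀^τ ν(R(s)v) ds dτ, where ν̄(v) = (1/2π)∫₀^{2π}ν(R(s)v)ds. Then the cylindrical average of ν·A₁(g) vanishes: A(ν A₁(g)) = 0. -/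
open MeasureTheory Real

/-- `ν̄(v) = (1/2π) ∫₀^{2π} ν(R(s)v) ds`. -/
noncomputable def nuBar (ν : V → ℝ) (v : V) : ℝ :=
  (1/(2*Real.pi)) * ∫ s in (0:ℝ)..(2*Real.pi), ν (Rot s v)

/-- The averaging operator
`A₁(g)(v) = (1/(2π ν̄(v))) ∫₀^{2π} g(R(τ)v) (∫₀^τ ν(R(s)v) ds) dτ`. -/
noncomputable def avgA1 (ν : V → ℝ) (g : V → ℝ) (v : V) : ℝ :=
  (1/(2*Real.pi * nuBar ν v)) *
    ∫ τ in (0:ℝ)..(2*Real.pi), g (Rot τ v) * ∫ s in (0:ℝ)..τ, ν (Rot s v)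

/-! Fix `v` and put `f θ = g (R(θ) v)`, `n θ = ν (R(θ) v)`, `N x = ∫₀ˣ n`. Since
`R(τ) R(θ) = R(τ + θ)` and `ν̄` is rotation invariant, `A(ν A₁(g))(v)` is a multiple of
`∫₀^{2π} n θ G θ dθ` with `G θ = ∫_θ^{θ+2π} f N`: the term `N θ ∫_θ^{θ+2π} f` drops out because
`f` has mean zero over every period. As `N (u + 2π) = N u + N 2π`, we get `G' = N(2π) f`, hence
`G 2π = G 0`, and integrating by parts,
`∫₀^{2π} n G = N(2π) G 0 - N(2π) ∫₀^{2π} N f = 0`. -/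

section PeriodicPrimitive

open Function

variable {f n : ℝ → ℝ} {T : ℝ}

lemma integral_comp_add_mul_integral_comp_add (hf : Continuous f) (hn : Continuous n)
    (hfT : Periodic f T) (hf0 : ∫ x in 0..T, f x = 0) (θ : ℝ) :
    ∫ τ in 0..T, f (τ + θ) * ∫ s in 0..τ, n (s + θ) =
      ∫ u in θ..θ + T, f u * ∫ s in 0..u, n s := by
  set N : ℝ → ℝ := fun x => ∫ s in 0..x, n s
  have hN : Continuous N :=
    intervalIntegral.continuous_primitive (fun _ _ => hn.intervalIntegrable _ _) 0
  have hshift : ∀ τ, ∫ s in 0..τ, n (s + θ) = N (τ + θ) - N θ := fun τ => by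
    rw [intervalIntegral.integral_comp_add_right, zero_add,
      intervalIntegral.integral_interval_sub_left (hn.intervalIntegrable _ _)
        (hn.intervalIntegrable _ _)]
  have hperiod : ∫ u in θ..θ + T, f u = 0 := by
    rw [hfT.intervalIntegral_add_eq θ 0, zero_add, hf0]
  simp_rw [hshift]
  rw [intervalIntegral.integral_comp_add_right (fun u => f u * (N u - N θ)), zero_add,
    add_comm T θ]
  simp_rw [mul_sub]
  rw [intervalIntegral.integral_sub
      ((by fun_prop : Continuous fun u => f u * N u).intervalIntegrable _ _)
      ((by fun_prop : Continuous fun u => f u * N θ).intervalIntegrable _ _),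
    intervalIntegral.integral_mul_const, hperiod, zero_mul, sub_zero]

lemma hasDerivAt_integral_period_mul_primitive (hf : Continuous f) (hn : Continuous n)
    (hfT : Periodic f T) (hnT : Periodic n T) (θ : ℝ) :
    HasDerivAt (fun θ => ∫ u in θ..θ + T, f u * ∫ s in 0..u, n s)
      ((∫ s in 0..T, n s) * f θ) θ := by
  set N : ℝ → ℝ := fun x => ∫ s in 0..x, n s
  have hN : Continuous N :=
    intervalIntegral.continuous_primitive (fun _ _ => hn.intervalIntegrable _ _) 0
  have hfN : Continuous fun u => f u * N u := by fun_prop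
  set P : ℝ → ℝ := fun x => ∫ u in 0..x, f u * N u
  have hG : (fun θ => ∫ u in θ..θ + T, f u * N u) = fun θ => P (θ + T) - P θ := by
    funext θ
    exact (intervalIntegral.integral_interval_sub_left (hfN.intervalIntegrable _ _)
      (hfN.intervalIntegrable _ _)).symm
  have hNT : N (θ + T) = N θ + N T := by
    simpa using hnT.intervalIntegral_add_eq_add 0 θ fun _ _ => hn.intervalIntegrable _ _
  have hP : ∀ x, HasDerivAt P (f x * N x) x := fun x =>
    (hfN.integral_hasStrictDerivAt 0 x).hasDerivAt
  rw [hG]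
  refine (((hP (θ + T)).comp_add_const θ T).sub (hP θ)).congr_deriv ?_
  rw [hfT, hNT]
  ring

lemma integral_mul_integral_comp_add_mul_primitive_eq_zero (hf : Continuous f)
    (hn : Continuous n) (hfT : Periodic f T) (hnT : Periodic n T)
    (hf0 : ∫ x in 0..T, f x = 0) :
    ∫ θ in 0..T, n θ * ∫ τ in 0..T, f (τ + θ) * ∫ s in 0..τ, n (s + θ) = 0 := by
  set N : ℝ → ℝ := fun x => ∫ s in 0..x, n s
  set G : ℝ → ℝ := fun θ => ∫ u in θ..θ + T, f u * N u
  have hG : ∀ θ, HasDerivAt G (N T * f θ) θ :=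
    hasDerivAt_integral_period_mul_primitive hf hn hfT hnT
  have hGT : G T = G 0 := by
    have := intervalIntegral.integral_eq_sub_of_hasDerivAt (fun θ _ => hG θ)
      ((continuous_const.mul hf).intervalIntegrable 0 T)
    rw [intervalIntegral.integral_const_mul, hf0, mul_zero] at this
    linarith
  have hparts := intervalIntegral.integral_mul_deriv_eq_deriv_mul
    (fun θ _ => (hn.integral_hasStrictDerivAt 0 θ).hasDerivAt) (fun θ _ => hG θ)
    (hn.intervalIntegrable 0 T) ((continuous_const.mul hf).intervalIntegrable 0 T)
  have hNf : ∫ θ in 0..T, N θ * (N T * f θ) = N T * G 0 := by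
    simp_rw [mul_left_comm (N _) (N T), intervalIntegral.integral_const_mul, mul_comm (N _)]
    simp [G]
  simp_rw [integral_comp_add_mul_integral_comp_add hf hn hfT hf0]
  change ∫ θ in 0..T, n θ * G θ = 0
  simp only [N, intervalIntegral.integral_same, zero_mul, sub_zero] at hparts
  rw [hNf, hGT] at hparts
  linarith

end PeriodicPrimitive

lemma Rot_Rot (a b : ℝ) (v : V) : Rot a (Rot b v) = Rot (a + b) v := by
  simp only [Rot, Real.cos_add, Real.sin_add, Prod.mk.injEq]
  exact ⟨by ring, by ring, trivial⟩

lemma continuous_Rot (v : V) : Continuous fun τ => Rot τ v := by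
  unfold Rot
  fun_prop

lemma periodic_Rot (v : V) : Function.Periodic (fun τ => Rot τ v) (2 * π) := fun τ => by
  simp [Rot]

lemma nuBar_Rot (ν : V → ℝ) (θ : ℝ) (v : V) : nuBar ν (Rot θ v) = nuBar ν v := by
  have hper : Function.Periodic (fun s => ν (Rot s v)) (2 * π) :=
    (periodic_Rot v).comp ν
  simp only [nuBar, Rot_Rot]
  rw [intervalIntegral.integral_comp_add_right (fun s => ν (Rot s v)), zero_add, add_comm,
    hper.intervalIntegral_add_eq θ 0, zero_add]

lemma avgA1_Rot (ν g : V → ℝ) (θ : ℝ) (v : V) :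
    avgA1 ν g (Rot θ v) = (1 / (2 * π * nuBar ν v)) *
      ∫ τ in 0..2 * π, g (Rot (τ + θ) v) * ∫ s in 0..τ, ν (Rot (s + θ) v) := by
  simp only [avgA1, nuBar_Rot, Rot_Rot]

lemma integral_Rot_eq_zero_of_cylAvg_eq_zero {h : V → ℝ} {v : V} (hh : cylAvg h v = 0) :
    ∫ τ in 0..2 * π, h (Rot τ v) = 0 := by
  simpa [cylAvg, pi_ne_zero] using hh

theorem cylAvg_nu_avgA1_general (ν g : V → ℝ)
    (hν : Continuous ν)
    (hg : Continuous g)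
    (hgavg : ∀ v : V, cylAvg g v = 0) :
    ∀ v : V, cylAvg (fun w => ν w * avgA1 ν g w) v = 0 := by
  intro v
  have key := integral_mul_integral_comp_add_mul_primitive_eq_zero
    (hg.comp (continuous_Rot v)) (hν.comp (continuous_Rot v))
    ((periodic_Rot v).comp g) ((periodic_Rot v).comp ν)
    (integral_Rot_eq_zero_of_cylAvg_eq_zero (hgavg v))
  simp only [Function.comp_apply] at key
  simp only [cylAvg, avgA1_Rot, mul_left_comm (ν _), intervalIntegral.integral_const_mul, key,
    mul_zero]

/-- if `A(g) = 0`, then `A(ν·A₁(g)) = 0`. -/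
theorem cylAvg_nu_avgA1 (ν g : V → ℝ) (α₁ α₂ : ℝ) (hα₁ : 0 < α₁)
    (hν : Continuous ν) (hνbound : ∀ v : V, α₁ ≤ ν v ∧ ν v ≤ α₂)
    (hg : Continuous g)
    (hgL2 : Integrable (fun v => (g v)^2 / Maxw v) (volume : Measure V))
    (hgavg : ∀ v : V, cylAvg g v = 0) :
    ∀ v : V, cylAvg (fun w => ν w * avgA1 ν g w) v = 0 :=
  cylAvg_nu_avgA1_general ν g hν hg hgavg
end
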